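/- arXiv:2411.14181 — 4 statements merged into one kernel-verified Lean document; each statement's English description precedes it below -/
import Mathlib

section
/- Fix integers S and P, and define Φ(m₁,m₂,n₁,n₂) := (n₁−n₂+m₁−m₂, n₁−n₂−m₁+m₂, m₁+m₂). Then Φ maps the set 𝒜 := {(m₁,m₂,n₁,n₂) ∈ ℤ⁴ : m₁+m₂−n₁−n₂ = S and n₁n₂−m₁m₂ = P} injectively into the set ℬ := {(a,b,c) ∈ ℤ³ : ab + 2cS = S² − 4P}. -/
/-- The map `Φ(m₁,m₂,n₁,n₂) = (n₁−n₂+m₁−m₂, n₁−n₂−m₁+m₂, m₁+m₂)`. -/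
def Phi : ℤ × ℤ × ℤ × ℤ → ℤ × ℤ × ℤ :=
  fun ⟨m₁, m₂, n₁, n₂⟩ => (n₁ - n₂ + m₁ - m₂, n₁ - n₂ - m₁ + m₂, m₁ + m₂)

theorem injection_lemma (S P : ℤ) :
    Set.InjOn Phi {q : ℤ × ℤ × ℤ × ℤ |
        q.1 + q.2.1 - q.2.2.1 - q.2.2.2 = S ∧ q.2.2.1 * q.2.2.2 - q.1 * q.2.1 = P} ∧
    Set.MapsTo Phi
      {q : ℤ × ℤ × ℤ × ℤ |
        q.1 + q.2.1 - q.2.2.1 - q.2.2.2 = S ∧ q.2.2.1 * q.2.2.2 - q.1 * q.2.1 = P}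
      {p : ℤ × ℤ × ℤ | p.1 * p.2.1 + 2 * p.2.2 * S = S ^ 2 - 4 * P} := by
  constructor
  · rintro ⟨m₁, m₂, n₁, n₂⟩ ⟨h1, h2⟩ ⟨m₁', m₂', n₁', n₂'⟩ ⟨h1', h2'⟩ heq
    simp only [Phi, Prod.mk.injEq] at heq
    obtain ⟨ea, eb, ec⟩ := heq
    simp only [Set.mem_setOf_eq] at h1 h1'
    refine Prod.ext ?_ (Prod.ext ?_ (Prod.ext ?_ ?_)) <;> dsimp <;> omega
  · rintro ⟨m₁, m₂, n₁, n₂⟩ ⟨h1, h2⟩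
    simp only [Set.mem_setOf_eq] at h1 h2 ⊢
    simp only [Phi]
    subst h1 h2
    ring
end

section
/- For integers d and q with q ≥ 1, let N(d,q) be the number of pairs (a,b) ∈ (ℤ/qℤ)² with ab ≡ d (mod q). Then N(d,q) ≤ τ(gcd(d,q)) · q, where τ is the number-of-divisors function. -/
theorem point_counting (d : ℤ) (q : ℕ) (hq : 1 ≤ q) :
    Nat.card {p : ZMod q × ZMod q // p.1 * p.2 = (d : ZMod q)} ≤
      (Int.gcd d q).divisors.card * q := by
  haveI : NeZero q := ⟨by omega⟩
  have hq0 : 0 < q := hq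
  -- every solution gives a congruence over ℤ
  have hdvdq : ∀ a b : ZMod q, a * b = (d : ZMod q) →
      (q:ℤ) ∣ (a.val : ℤ) * b.val - d := by
    intro a b h
    rw [← ZMod.intCast_zmod_eq_zero_iff_dvd]
    push_cast
    simp only [ZMod.natCast_val, ZMod.cast_id]
    rw [h]; ring
  have hmem : ∀ a b : ZMod q, a * b = (d : ZMod q) →
      Nat.gcd a.val q ∈ (Int.gcd d q).divisors := by
    intro a b h
    rw [Nat.mem_divisors]
    refine ⟨?_, ?_⟩
    · have h1 : (Nat.gcd a.val q : ℤ) ∣ d := by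
        have h2 : (Nat.gcd a.val q : ℤ) ∣ (a.val : ℤ) * b.val - d :=
          dvd_trans (Int.natCast_dvd_natCast.mpr (Nat.gcd_dvd_right _ _)) (hdvdq a b h)
        have h3 : (Nat.gcd a.val q : ℤ) ∣ (a.val : ℤ) * b.val :=
          Dvd.dvd.mul_right (Int.natCast_dvd_natCast.mpr (Nat.gcd_dvd_left _ _)) _
        have h4 := dvd_sub h3 h2
        simpa using h4
      have h5 : Nat.gcd a.val q ∣ d.natAbs := by
        rwa [← Int.natAbs_dvd_natAbs, Int.natAbs_natCast] at h1
      exact Nat.dvd_gcd h5 (Nat.gcd_dvd_right _ _)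
    · exact (Int.gcd_pos_iff.mpr (Or.inr (by exact_mod_cast hq0.ne' : (q:ℤ) ≠ 0))).ne'
  set T := {p : ZMod q × ZMod q // p.1 * p.2 = (d : ZMod q)} with hT
  -- the injection
  have hbound : ∀ a b : ZMod q,
      a.val / Nat.gcd a.val q +
        (q / Nat.gcd a.val q) * (b.val / (q / Nat.gcd a.val q)) < q := by
    intro a b
    set g := Nat.gcd a.val q with hg
    have hg0 : 0 < g := Nat.gcd_pos_of_pos_right _ hq0
    have hgq : g ∣ q := Nat.gcd_dvd_right _ _
    set q' := q / g with hq'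
    have hq'0 : 0 < q' := Nat.div_pos (Nat.le_of_dvd hq0 hgq) hg0
    have hgq' : g * q' = q := Nat.mul_div_cancel' hgq
    have ha' : a.val / g < q' := Nat.div_lt_div_of_lt_of_dvd hgq (ZMod.val_lt a)
    have ht : b.val / q' < g := by
      rw [Nat.div_lt_iff_lt_mul hq'0]
      calc b.val < q := ZMod.val_lt b
        _ = g * q' := hgq'.symm
    calc a.val / g + q' * (b.val / q') < q' + q' * (b.val / q') := by omega
      _ = q' * (b.val / q' + 1) := by ring
      _ ≤ q' * g := Nat.mul_le_mul_left _ (by omega)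
      _ = q := by rw [mul_comm]; exact hgq'
  let f : T → {g // g ∈ (Int.gcd d q).divisors} × Fin q := fun p =>
    (⟨Nat.gcd p.1.1.val q, hmem p.1.1 p.1.2 p.2⟩,
     ⟨p.1.1.val / Nat.gcd p.1.1.val q +
        (q / Nat.gcd p.1.1.val q) * (p.1.2.val / (q / Nat.gcd p.1.1.val q)),
      hbound p.1.1 p.1.2⟩)
  have hinj : Function.Injective f := by
    rintro ⟨⟨a₁, b₁⟩, h₁⟩ ⟨⟨a₂, b₂⟩, h₂⟩ hfe
    simp only [f, Prod.mk.injEq, Subtype.mk.injEq, Fin.mk.injEq] at hfe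
    obtain ⟨hg, hc⟩ := hfe
    set g := Nat.gcd a₁.val q with hgdef
    have hg0 : 0 < g := Nat.gcd_pos_of_pos_right _ hq0
    have hgq : g ∣ q := Nat.gcd_dvd_right _ _
    set q' := q / g with hq'def
    have hq'0 : 0 < q' := Nat.div_pos (Nat.le_of_dvd hq0 hgq) hg0
    rw [← hg] at hc
    have ha1' : a₁.val / g < q' := Nat.div_lt_div_of_lt_of_dvd hgq (ZMod.val_lt a₁)
    have ha2' : a₂.val / g < q' := Nat.div_lt_div_of_lt_of_dvd hgq (ZMod.val_lt a₂)
    -- decompose the code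
    have ha' : a₁.val / g = a₂.val / g := by
      have e1 := congrArg (· % q') hc
      simpa [← hq'def, Nat.add_mul_mod_self_left, Nat.mod_eq_of_lt ha1',
        Nat.mod_eq_of_lt ha2'] using e1
    have htq : b₁.val / q' = b₂.val / q' := by
      have e2 := congrArg (· / q') hc
      simpa [← hq'def, Nat.add_mul_div_left _ _ hq'0, Nat.div_eq_of_lt ha1',
        Nat.div_eq_of_lt ha2'] using e2
    -- a₁ = a₂
    have hval : a₁.val = a₂.val := by
      have d1 : g ∣ a₁.val := Nat.gcd_dvd_left _ _
      have d2 : g ∣ a₂.val := by rw [hg]; exact Nat.gcd_dvd_left _ _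
      calc a₁.val = g * (a₁.val / g) := (Nat.mul_div_cancel' d1).symm
        _ = g * (a₂.val / g) := by rw [ha']
        _ = a₂.val := Nat.mul_div_cancel' d2
    have ha : a₁ = a₂ := ZMod.val_injective q hval
    -- b₁ = b₂
    have hdvd : (q : ℤ) ∣ (a₁.val : ℤ) * ((b₁.val : ℤ) - b₂.val) := by
      have k1 := hdvdq a₁ b₁ h₁
      have k2 := hdvdq a₂ b₂ h₂
      rw [← ha] at k2
      have := dvd_sub k1 k2
      convert this using 1
      · rfl
      ring
    have hcop : Nat.Coprime (a₁.val / g) q' := Nat.coprime_div_gcd_div_gcd hg0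
    have hq'dvd : (q' : ℤ) ∣ (b₁.val : ℤ) - b₂.val := by
      have hgq' : g * q' = q := Nat.mul_div_cancel' hgq
      have haeq : g * (a₁.val / g) = a₁.val := Nat.mul_div_cancel' (Nat.gcd_dvd_left _ _)
      have hcast : (a₁.val : ℤ) = (g : ℤ) * ((a₁.val / g : ℕ) : ℤ) := by
        exact_mod_cast haeq.symm
      have hqc : (g : ℤ) * (q' : ℤ) = (q : ℤ) := by exact_mod_cast hgq'
      have h6 : (g : ℤ) * q' ∣ (g : ℤ) * (((a₁.val / g : ℕ) : ℤ) * ((b₁.val : ℤ) - b₂.val)) := by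
        rw [← mul_assoc, ← hcast, hqc]
        exact hdvd
      have h7 : (q' : ℤ) ∣ (a₁.val / g : ℕ) * ((b₁.val : ℤ) - b₂.val) :=
        (mul_dvd_mul_iff_left (by exact_mod_cast hg0.ne' : (g : ℤ) ≠ 0)).mp h6
      exact (Nat.isCoprime_iff_coprime.mpr hcop.symm).dvd_of_dvd_mul_left h7
    have hmod : b₁.val % q' = b₂.val % q' := by
      have : b₂.val ≡ b₁.val [MOD q'] := (Nat.modEq_iff_dvd).mpr hq'dvd
      exact this.symm
    have hbval : b₁.val = b₂.val := by
      calc b₁.val = q' * (b₁.val / q') + b₁.val % q' := (Nat.div_add_mod _ _).symm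
        _ = q' * (b₂.val / q') + b₂.val % q' := by rw [htq, hmod]
        _ = b₂.val := Nat.div_add_mod _ _
    have hb : b₁ = b₂ := ZMod.val_injective q hbval
    simp [ha, hb]
  calc Nat.card T ≤ Nat.card ({g // g ∈ (Int.gcd d q).divisors} × Fin q) :=
        Nat.card_le_card_of_injective f hinj
    _ = (Int.gcd d q).divisors.card * q := by
        simp only [Nat.card_eq_fintype_card, Fintype.card_prod, Fintype.card_coe, Fintype.card_fin]
end

section
/- Let θ ∈ ℝ, r a positive integer, k = ⌊rθ⌋, and suppose q is a positive integer and d an integer with kq ≡ d (mod r). Then there exists an integer a such that |qθ − a| < (q + |d|)/r. -/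
theorem congruence_gives_approximation (θ : ℝ) (r : ℕ) (hr : 0 < r) (k : ℤ)
    (hk : k = ⌊(r : ℝ) * θ⌋) (q : ℕ) (hq : 0 < q) (d : ℤ)
    (hcong : (r : ℤ) ∣ (k * q - d)) :
    ∃ a : ℤ, |q * θ - a| < ((q : ℝ) + |(d : ℝ)|) / r := by
  obtain ⟨m, hm⟩ := hcong
  refine ⟨m, ?_⟩
  have hr' : (0:ℝ) < r := by exact_mod_cast hr
  have hq' : (0:ℝ) < q := by exact_mod_cast hq
  have hε0 : (0:ℝ) ≤ (r:ℝ)*θ - k := by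
    rw [hk]; linarith [Int.floor_le ((r:ℝ)*θ)]
  have hε1 : (r:ℝ)*θ - k < 1 := by
    rw [hk]; linarith [Int.lt_floor_add_one ((r:ℝ)*θ)]
  have hmr : (k:ℝ)*q - d = r*m := by exact_mod_cast congrArg (fun z : ℤ => (z:ℝ)) hm
  have key : (q:ℝ)*θ - m = ((d:ℝ) + q*((r:ℝ)*θ - k))/r := by
    field_simp
    nlinarith [hmr]
  rw [key, abs_div, abs_of_pos hr', div_lt_div_iff₀ hr' hr']
  have h1 : |(d:ℝ) + q*((r:ℝ)*θ - k)| ≤ |(d:ℝ)| + q*((r:ℝ)*θ - k) := by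
    calc |(d:ℝ) + q*((r:ℝ)*θ - k)| ≤ |(d:ℝ)| + |(q:ℝ)*((r:ℝ)*θ - k)| := abs_add_le _ _
    _ = |(d:ℝ)| + q*((r:ℝ)*θ - k) := by
        rw [abs_of_nonneg (mul_nonneg hq'.le hε0)]
  have h2 : |(d:ℝ)| + q*((r:ℝ)*θ - k) < (q:ℝ) + |(d:ℝ)| := by nlinarith
  exact mul_lt_mul_of_pos_right (h1.trans_lt h2) hr'
end

section
/- Let S, T be positive reals with T ≥ S ≥ 1, an integer S-value in [1,S] understood as a modulus, and fix residues u, v with 1 ≤ u, v ≤ S. Then the number of pairs of nonzero integers (a,b) with |a|, |b| ≤ C·T, a ≡ u (mod S), b ≡ v (mod S), and |ab| ≤ C·T·S, is ≪ (T/S)·log(2 + T/S), where C is any fixed constant and the implied constant depends only on C. -/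
open Finset


lemma sum_Icc_int_inv_le (N : ℕ) :
    ∑ k ∈ Icc (1:ℤ) N, (1/(k:ℝ)) ≤ 1 + Real.log N := by
  have h1 : ∑ k ∈ Icc (1:ℤ) N, (1/(k:ℝ)) = ∑ d ∈ Icc 1 N, ((d:ℝ))⁻¹ := by
    refine Finset.sum_nbij' (fun k => k.toNat) (fun d => (d:ℤ)) ?_ ?_ ?_ ?_ ?_
    · intro k hk; simp only [mem_Icc] at *; omega
    · intro d hd; simp only [mem_Icc] at *; omega
    · intro k hk; simp only [mem_Icc] at hk; show ((k.toNat : ℤ)) = k; omega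
    · intro d _; simp
    · intro k hk; simp only [mem_Icc] at hk
      rw [one_div]; congr 1
      exact_mod_cast (Int.toNat_of_nonneg (by omega : (0:ℤ) ≤ k)).symm
  have h2 : (harmonic N : ℝ) = ∑ d ∈ Icc 1 N, ((d:ℝ))⁻¹ := by
    rw [harmonic_eq_sum_Icc]; push_cast; rfl
  rw [h1, ← h2]
  exact harmonic_le_one_add_log N

private noncomputable def Gaux (k : ℤ) : ℝ := if 1 ≤ k then 1/(k:ℝ) else if k = 0 then 1 else 0

lemma sum_inv_max_le (N : ℕ) :
    ∑ k ∈ Icc (-(N:ℤ)) N, (1 / ((max |k| 1 : ℤ):ℝ)) ≤ 2 * (2 + Real.log N) := by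
  have hpt : ∀ k : ℤ, 1 / ((max |k| 1 : ℤ):ℝ) ≤ Gaux k + Gaux (-k) := by
    intro k
    rcases lt_trichotomy k 0 with hk | hk | hk
    · rw [abs_of_neg hk, max_eq_left (by omega)]
      simp only [Gaux]
      rw [if_neg (by omega), if_neg (by omega), if_pos (by omega)]
      push_cast; simp
    · subst hk; norm_num [Gaux]
    · rw [abs_of_pos hk, max_eq_left (by omega)]
      simp only [Gaux]
      rw [if_pos (by omega), if_neg (by omega), if_neg (by omega)]
      simp
  have hneg : ∑ k ∈ Icc (-(N:ℤ)) N, Gaux (-k) = ∑ k ∈ Icc (-(N:ℤ)) N, Gaux k := by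
    refine Finset.sum_nbij' (fun k => -k) (fun k => -k) ?_ ?_ ?_ ?_ ?_ <;>
      intro k hk <;> simp only [mem_Icc] at * <;>
        first | omega | (show Gaux (- -k) = Gaux _; rw [neg_neg]) | rfl
  have hGsum : ∑ k ∈ Icc (-(N:ℤ)) N, Gaux k ≤ 2 + Real.log N := by
    have hsub : Icc (0:ℤ) N ⊆ Icc (-(N:ℤ)) N := by intro k; simp only [mem_Icc]; omega
    have hzero : ∀ k ∈ Icc (-(N:ℤ)) N, k ∉ Icc (0:ℤ) N → Gaux k = 0 := by
      intro k hk hk'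
      simp only [mem_Icc] at *
      simp only [Gaux]
      rw [if_neg (by omega), if_neg (by omega)]
    rw [← Finset.sum_subset hsub hzero]
    have hins : Icc (0:ℤ) N = insert 0 (Icc (1:ℤ) N) := by
      ext k; simp only [mem_insert, mem_Icc]; omega
    rw [hins, Finset.sum_insert (by simp)]
    have hG0 : Gaux 0 = 1 := by norm_num [Gaux]
    have hrest : ∑ k ∈ Icc (1:ℤ) N, Gaux k = ∑ k ∈ Icc (1:ℤ) N, 1/(k:ℝ) := by
      apply Finset.sum_congr rfl
      intro k hk
      simp only [mem_Icc] at hk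
      simp only [Gaux]
      rw [if_pos (by omega)]
    rw [hG0, hrest]
    linarith [sum_Icc_int_inv_le N]
  calc ∑ k ∈ Icc (-(N:ℤ)) N, (1 / ((max |k| 1 : ℤ):ℝ))
      ≤ ∑ k ∈ Icc (-(N:ℤ)) N, (Gaux k + Gaux (-k)) := Finset.sum_le_sum (fun k _ => hpt k)
    _ = ∑ k ∈ Icc (-(N:ℤ)) N, Gaux k + ∑ k ∈ Icc (-(N:ℤ)) N, Gaux (-k) := Finset.sum_add_distrib
    _ = 2 * (∑ k ∈ Icc (-(N:ℤ)) N, Gaux k) := by rw [hneg]; ring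
    _ ≤ 2 * (2 + Real.log N) := by linarith [hGsum]


lemma residue_count {α : Type*} (S : ℕ) (hS : 1 ≤ (S:ℝ)) (v : ℤ) (hv : |(v:ℝ)| ≤ S)
    (B : ℝ) (hB : 0 ≤ B) (F : Finset α) (g : α → ℤ) (hg : Set.InjOn g F)
    (hF : ∀ x ∈ F, |((g x : ℤ):ℝ)| ≤ B ∧ (S:ℤ) ∣ g x - v) :
    (F.card : ℝ) ≤ 2 * (B / S) + 5 := by
  have hS0 : (0:ℝ) < S := by linarith
  have hSZ : (0:ℤ) < (S:ℤ) := by exact_mod_cast hS0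
  set m : ℕ := ⌈B / S⌉₊ + 1 with hm
  have hcard : F.card ≤ (Icc (-(m:ℤ)) m).card := by
    apply Finset.card_le_card_of_injOn (fun x => (g x - v) / S)
    · intro x hx
      obtain ⟨hb, k, hk⟩ := hF x hx
      have hdiv : (g x - v) / (S:ℤ) = k := by
        rw [hk, Int.mul_ediv_cancel_left _ (by omega)]
      have hreal : |(k:ℝ)| ≤ B / S + 1 := by
        have h1 : |((g x : ℤ):ℝ) - (v:ℝ)| ≤ B + S := by
          calc |((g x : ℤ):ℝ) - (v:ℝ)| ≤ |((g x : ℤ):ℝ)| + |(v:ℝ)| := abs_sub _ _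
          _ ≤ B + S := by linarith
        have h2 : ((S:ℝ)) * |(k:ℝ)| ≤ B + S := by
          have : ((g x : ℤ):ℝ) - (v:ℝ) = (S:ℝ) * (k:ℝ) := by exact_mod_cast congrArg (Int.cast : ℤ → ℝ) hk
          rw [this, abs_mul, abs_of_pos hS0] at h1
          exact h1
        have h3 : |(k:ℝ)| ≤ (B + S)/S := (le_div_iff₀ hS0).mpr (by linarith [h2])
        rw [add_div, div_self hS0.ne'] at h3
        exact h3
      have hkm : |k| ≤ (m:ℤ) := by
        have h4 : |(k:ℝ)| ≤ (m:ℝ) := by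
          have h3 : B / S + 1 ≤ (⌈B / S⌉₊ : ℝ) + 1 := by
            have := Nat.le_ceil (B / S); linarith
          push_cast [hm]
          linarith
        have h5 : ((|k|:ℤ):ℝ) ≤ ((m:ℤ):ℝ) := by rw [Int.cast_abs]; push_cast; push_cast at h4; linarith
        exact_mod_cast h5
      rw [abs_le] at hkm
      simp only [mem_Icc, hdiv]
      exact Finset.mem_coe.mpr (Finset.mem_Icc.mpr hkm)
    · intro x hx y hy hxy
      obtain ⟨-, hdx⟩ := hF x (by simpa using hx)
      obtain ⟨-, hdy⟩ := hF y (by simpa using hy)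
      apply hg hx hy
      simp only at hxy
      have h1 := Int.ediv_mul_cancel hdx
      have h2 := Int.ediv_mul_cancel hdy
      rw [hxy] at h1
      omega
  have hcard2' : (Icc (-(m:ℤ)) m).card = 2 * m + 1 := by
    rw [Int.card_Icc]; omega
  have hcard2 : ((Icc (-(m:ℤ)) m).card : ℝ) = 2 * (m:ℝ) + 1 := by
    rw [hcard2']; push_cast; ring
  have hmle : (m:ℝ) ≤ B / S + 2 := by
    have := Nat.ceil_lt_add_one (by positivity : (0:ℝ) ≤ B / S)
    push_cast [hm]
    linarith
  calc (F.card : ℝ) ≤ ((Icc (-(m:ℤ)) m).card : ℝ) := by exact_mod_cast hcard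
  _ = 2 * (m:ℝ) + 1 := hcard2
  _ ≤ 2 * (B/S) + 5 := by linarith


lemma maxabs_lb (S u k : ℤ) (hS : 1 ≤ S) (hu1 : 1 ≤ u) (hu2 : u ≤ S) :
    max |k| 1 * S ≤ 2 * max |u + k * S| S := by
  have hmaxS : S ≤ max |u + k * S| S := le_max_right _ _
  rcases le_or_gt 1 k with hk | hk
  · rw [abs_of_pos (by omega), max_eq_left hk]
    have h1 : 0 < u + k * S := by nlinarith
    have h2 : k * S ≤ u + k * S := by linarith
    have h3 : u + k * S ≤ |u + k * S| := le_abs_self _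
    have h4 : |u + k * S| ≤ max |u + k * S| S := le_max_left _ _
    linarith
  · rcases le_or_gt k (-2) with hk2 | hk2
    · have habs : |k| = -k := abs_of_neg (by omega)
      rw [habs, max_eq_left (by omega)]
      have h1 : u + k * S < 0 := by nlinarith
      have h2 : |u + k * S| = -(u + k * S) := abs_of_neg h1
      have h3 : 2 * u ≤ -k * S := by nlinarith
      have h4 : |u + k * S| ≤ max |u + k * S| S := le_max_left _ _
      nlinarith
    · have : max |k| 1 = 1 := max_eq_right (by rw [abs_le]; omega)
      rw [this]
      linarith

set_option maxHeartbeats 2000000 in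
theorem hyperbola_count (C : ℝ) (hC : 0 < C) :
    ∃ D > (0 : ℝ), ∀ (S : ℕ) (T : ℝ) (u v : ℤ),
      1 ≤ (S : ℝ) → (S : ℝ) ≤ T → 1 ≤ u → u ≤ S → 1 ≤ v → v ≤ S →
      (Set.ncard {p : ℤ × ℤ | p.1 ≠ 0 ∧ p.2 ≠ 0 ∧
          |(p.1 : ℝ)| ≤ C * T ∧ |(p.2 : ℝ)| ≤ C * T ∧
          (S : ℤ) ∣ (p.1 - u) ∧ (S : ℤ) ∣ (p.2 - v) ∧
          |(p.1 * p.2 : ℤ)| ≤ C * T * S} : ℝ) ≤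
        D * (T / S) * Real.log (2 + T / S) := by
  classical
  have hlogC : 0 ≤ Real.log (C + 2) := Real.log_nonneg (by linarith)
  refine ⟨10*C + 26 + 8*C*(3 + Real.log (C+2)), by nlinarith, ?_⟩
  intro S T u v hS hT hu1 hu2 hv1 hv2
  have hS0 : (0:ℝ) < S := by linarith
  have hT0 : (0:ℝ) < T := by linarith
  have hCT : (0:ℝ) < C * T := by positivity
  have hSZ : (1:ℤ) ≤ (S:ℤ) := by exact_mod_cast hS
  have hx : (1:ℝ) ≤ T / S := (one_le_div hS0).mpr hT
  set L := Real.log (2 + T / S) with hL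
  have hL1 : 1 ≤ L := by
    rw [hL, Real.le_log_iff_exp_le (by linarith)]
    have := Real.exp_one_lt_d9
    linarith
  obtain ⟨P, hset, hPmem⟩ : ∃ P : Finset (ℤ × ℤ),
      {p : ℤ × ℤ | p.1 ≠ 0 ∧ p.2 ≠ 0 ∧
          |(p.1 : ℝ)| ≤ C * T ∧ |(p.2 : ℝ)| ≤ C * T ∧
          (S : ℤ) ∣ (p.1 - u) ∧ (S : ℤ) ∣ (p.2 - v) ∧
          |(p.1 * p.2 : ℤ)| ≤ C * T * S} = (P : Set (ℤ × ℤ)) ∧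
      ∀ p ∈ P, p.1 ≠ 0 ∧ p.2 ≠ 0 ∧ |(p.1 : ℝ)| ≤ C * T ∧ |(p.2 : ℝ)| ≤ C * T ∧
        (S : ℤ) ∣ (p.1 - u) ∧ (S : ℤ) ∣ (p.2 - v) ∧ ((|p.1 * p.2| : ℤ) : ℝ) ≤ C * T * S := by
    set M : ℕ := ⌈C*T⌉₊ with hM
    have habsM : ∀ a : ℤ, |(a:ℝ)| ≤ C * T → (-(M:ℤ) ≤ a ∧ a ≤ M) := by
      intro a ha
      have h1 : |(a:ℝ)| ≤ (M:ℝ) := le_trans ha (Nat.le_ceil _)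
      rw [abs_le] at h1
      exact ⟨by exact_mod_cast h1.1, by exact_mod_cast h1.2⟩
    refine ⟨(Icc (-(M:ℤ)) M ×ˢ Icc (-(M:ℤ)) M).filter
      (fun p => p.1 ≠ 0 ∧ p.2 ≠ 0 ∧ |(p.1 : ℝ)| ≤ C * T ∧ |(p.2 : ℝ)| ≤ C * T ∧
          (S : ℤ) ∣ (p.1 - u) ∧ (S : ℤ) ∣ (p.2 - v) ∧
          |(p.1 * p.2 : ℤ)| ≤ C * T * S), ?_, ?_⟩
    · ext p
      simp only [Set.mem_setOf_eq, coe_filter, mem_product, mem_Icc, Set.mem_setOf_eq]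
      constructor
      · rintro ⟨h1, h2, h3, h4, h5⟩
        exact ⟨⟨habsM p.1 h3, habsM p.2 h4⟩, h1, h2, h3, h4, h5⟩
      · rintro ⟨-, h⟩; exact h
    · intro p hp
      exact_mod_cast (mem_filter.mp hp).2
  rw [hset, Set.ncard_coe_finset]
  clear hset
  -- fiber decomposition
  set N : ℕ := ⌈C*T/S⌉₊ + 1 with hN
  clear_value N
  have hN1 : (1:ℝ) ≤ N := by
    have : (1:ℕ) ≤ N := by omega
    exact_mod_cast this
  have hNx : (N:ℝ) ≤ C*(T/S) + 2 := by
    have h1 := Nat.ceil_lt_add_one (show (0:ℝ) ≤ C*T/S by positivity)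
    have h2 : C*T/S = C*(T/S) := by ring
    push_cast [hN]
    linarith [h2 ▸ h1]
  have hmaps : ∀ p ∈ P, (p.1 - u) / (S:ℤ) ∈ Icc (-(N:ℤ)) N := by
    intro p hp
    obtain ⟨-, -, h3, -, h5, -, -⟩ := hPmem p hp
    obtain ⟨k, hk⟩ := h5
    have hdiv : (p.1 - u) / (S:ℤ) = k := by
      rw [hk, Int.mul_ediv_cancel_left _ (by omega)]
    have hreal : |(k:ℝ)| ≤ C*T/S + 1 := by
      have hu : |(u:ℝ)| ≤ (S:ℝ) := by
        rw [abs_le]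
        constructor
        · have : (1:ℝ) ≤ (u:ℝ) := by exact_mod_cast hu1
          linarith
        · exact_mod_cast hu2
      have h1 : |((p.1:ℤ):ℝ) - (u:ℝ)| ≤ C*T + S := by
        calc |((p.1:ℤ):ℝ) - (u:ℝ)| ≤ |((p.1:ℤ):ℝ)| + |(u:ℝ)| := abs_sub _ _
        _ ≤ C*T + S := by linarith
      have h2 : (S:ℝ) * |(k:ℝ)| ≤ C*T + S := by
        have he : ((p.1:ℤ):ℝ) - (u:ℝ) = (S:ℝ) * (k:ℝ) := by exact_mod_cast congrArg (Int.cast : ℤ → ℝ) hk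
        rw [he, abs_mul, abs_of_pos hS0] at h1
        exact h1
      have h3 : |(k:ℝ)| ≤ (C*T + S)/S := (le_div_iff₀ hS0).mpr (by linarith)
      rw [add_div, div_self hS0.ne'] at h3
      exact h3
    have hkN : |k| ≤ (N:ℤ) := by
      have h4 : |(k:ℝ)| ≤ (N:ℝ) := by
        have h5 := Nat.le_ceil (C*T/S)
        push_cast [hN]
        linarith
      have h6 : ((|k|:ℤ):ℝ) ≤ ((N:ℤ):ℝ) := by rw [Int.cast_abs]; push_cast; push_cast at h4; linarith
      exact_mod_cast h6
    rw [abs_le] at hkN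
    simp only [mem_Icc, hdiv]
    exact hkN
  have hcard := Finset.card_eq_sum_card_fiberwise hmaps
  -- per-fiber bound
  have hvabs : |(v:ℝ)| ≤ (S:ℝ) := by
    rw [abs_le]
    constructor
    · have : (1:ℝ) ≤ (v:ℝ) := by exact_mod_cast hv1
      linarith
    · exact_mod_cast hv2
  have hfib : ∀ k ∈ Icc (-(N:ℤ)) N,
      ((P.filter (fun p => (p.1 - u) / (S:ℤ) = k)).card : ℝ) ≤
        2*(C*T) * (1/((max |u + k*(S:ℤ)| (S:ℤ) : ℤ):ℝ)) + 5 := by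
    intro k _
    set maxR : ℝ := ((max |u + k*(S:ℤ)| (S:ℤ) : ℤ):ℝ) with hmaxR
    have hmaxcast : maxR = max |((u + k*(S:ℤ) : ℤ):ℝ)| (S:ℝ) := by
      rw [hmaxR]; push_cast; rfl
    have hmaxSle : (S:ℝ) ≤ maxR := by rw [hmaxcast]; exact le_max_right _ _
    have hmaxpos : 0 < maxR := lt_of_lt_of_le hS0 hmaxSle
    have hfirst : ∀ p ∈ P.filter (fun p => (p.1 - u) / (S:ℤ) = k), p.1 = u + k*(S:ℤ) := by
      intro p hp
      obtain ⟨hpP, hpk⟩ := mem_filter.mp hp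
      obtain ⟨-, -, -, -, h5, -, -⟩ := hPmem p hpP
      obtain ⟨c, hc⟩ := h5
      have : (p.1 - u) / (S:ℤ) = c := by rw [hc, Int.mul_ediv_cancel_left _ (by omega)]
      rw [this] at hpk
      subst hpk
      have := mul_comm (S:ℤ) c
      omega
    have hbound := residue_count S hS v hvabs (C*T*(S:ℝ)/maxR) (by positivity)
      (P.filter (fun p => (p.1 - u) / (S:ℤ) = k)) Prod.snd ?_ ?_
    · have heq : C*T*(S:ℝ)/maxR/(S:ℝ) = C*T/maxR := by
        rw [div_div, mul_comm maxR (S:ℝ), ← div_div, mul_div_assoc, div_self hS0.ne', mul_one]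
      calc ((P.filter (fun p => (p.1 - u) / (S:ℤ) = k)).card : ℝ)
          ≤ 2 * (C*T*(S:ℝ)/maxR/(S:ℝ)) + 5 := hbound
        _ = 2*(C*T) * (1/maxR) + 5 := by rw [heq]; ring
    · intro p hp q hq hpq
      have h1 := hfirst p (by simpa using hp)
      have h2 := hfirst q (by simpa using hq)
      exact Prod.ext (h1.trans h2.symm) hpq
    · intro p hp
      have hp1 : p.1 = u + k*(S:ℤ) := hfirst p hp
      obtain ⟨hpP, -⟩ := mem_filter.mp hp
      obtain ⟨h1, h2, h3, h4, h5, h6, h7⟩ := hPmem p hpP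
      refine ⟨?_, h6⟩
      show |((p.2:ℤ):ℝ)| ≤ C*T*(S:ℝ)/maxR
      rw [le_div_iff₀ hmaxpos]
      push_cast at h7
      rw [abs_mul] at h7
      have hS2 : |((p.2:ℤ):ℝ)| * (S:ℝ) ≤ C*T*(S:ℝ) :=
        mul_le_mul_of_nonneg_right h4 (le_of_lt hS0)
      have hcastp1 : ((u + k*(S:ℤ) : ℤ):ℝ) = ((p.1:ℤ):ℝ) := by exact_mod_cast congrArg (Int.cast : ℤ → ℝ) hp1.symm
      rw [hmaxcast, hcastp1]
      rcases max_cases |((p.1:ℤ):ℝ)| ((S:ℝ)) with ⟨heq, -⟩ | ⟨heq, -⟩ <;> rw [heq] <;>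
        nlinarith [abs_nonneg ((p.1:ℤ):ℝ), abs_nonneg ((p.2:ℤ):ℝ)]
  -- sum up
  have hIccCard : (Icc (-(N:ℤ)) N).card = 2*N+1 := by rw [Int.card_Icc]; omega
  have hcardR : ((P.card : ℕ):ℝ) = ∑ k ∈ Icc (-(N:ℤ)) N,
      ((P.filter (fun p => (p.1 - u)/(S:ℤ) = k)).card : ℝ) := by exact_mod_cast hcard
  have hsum1 : ((P.card : ℕ):ℝ) ≤ 2*(C*T) * (∑ k ∈ Icc (-(N:ℤ)) N,
      1/((max |u + k*(S:ℤ)| (S:ℤ) : ℤ):ℝ)) + 5*(2*(N:ℝ)+1) := by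
    rw [hcardR]
    calc ∑ k ∈ Icc (-(N:ℤ)) N, ((P.filter (fun p => (p.1 - u)/(S:ℤ) = k)).card : ℝ)
        ≤ ∑ k ∈ Icc (-(N:ℤ)) N,
            (2*(C*T) * (1/((max |u + k*(S:ℤ)| (S:ℤ) : ℤ):ℝ)) + 5) := Finset.sum_le_sum hfib
      _ = 2*(C*T) * (∑ k ∈ Icc (-(N:ℤ)) N,
            1/((max |u + k*(S:ℤ)| (S:ℤ) : ℤ):ℝ)) + 5*(2*(N:ℝ)+1) := by
          rw [Finset.sum_add_distrib, ← Finset.mul_sum, Finset.sum_const, hIccCard]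
          push_cast
          ring
  have hsum2 : ∑ k ∈ Icc (-(N:ℤ)) N, 1/((max |u + k*(S:ℤ)| (S:ℤ) : ℤ):ℝ) ≤
      (2/(S:ℝ)) * ∑ k ∈ Icc (-(N:ℤ)) N, 1/((max |k| 1 : ℤ):ℝ) := by
    rw [Finset.mul_sum]
    apply Finset.sum_le_sum
    intro k _
    have hib := maxabs_lb (S:ℤ) u k hSZ hu1 hu2
    have h1 : ((max |k| 1 : ℤ):ℝ) * (S:ℝ) ≤ 2 * ((max |u + k*(S:ℤ)| (S:ℤ) : ℤ):ℝ) := by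
      exact_mod_cast hib
    have hmk : (0:ℝ) < ((max |k| 1 : ℤ):ℝ) := by
      have : (1:ℤ) ≤ max |k| 1 := le_max_right _ _
      have : (1:ℝ) ≤ ((max |k| 1 : ℤ):ℝ) := by exact_mod_cast this
      linarith
    have hA : (0:ℝ) < ((max |u + k*(S:ℤ)| (S:ℤ) : ℤ):ℝ) := by
      have : (S:ℤ) ≤ max |u + k*(S:ℤ)| (S:ℤ) := le_max_right _ _
      have : (S:ℝ) ≤ ((max |u + k*(S:ℤ)| (S:ℤ) : ℤ):ℝ) := by exact_mod_cast this
      linarith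
    have e1 : (2/(S:ℝ)) * (1/((max |k| 1 : ℤ):ℝ)) = 2/((S:ℝ) * ((max |k| 1 : ℤ):ℝ)) := by
      field_simp
    rw [e1, div_le_div_iff₀ hA (by positivity)]
    linarith [h1]
  have hsum3 := sum_inv_max_le N
  have hmono : 2*(C*T) * (∑ k ∈ Icc (-(N:ℤ)) N,
      1/((max |u + k*(S:ℤ)| (S:ℤ) : ℤ):ℝ)) ≤ 2*(C*T) * ((2/(S:ℝ)) * (2*(2+Real.log N))) := by
    apply mul_le_mul_of_nonneg_left _ (by positivity)
    calc ∑ k ∈ Icc (-(N:ℤ)) N, 1/((max |u + k*(S:ℤ)| (S:ℤ) : ℤ):ℝ)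
        ≤ (2/(S:ℝ)) * ∑ k ∈ Icc (-(N:ℤ)) N, 1/((max |k| 1 : ℤ):ℝ) := hsum2
      _ ≤ (2/(S:ℝ)) * (2*(2+Real.log N)) := by
          apply mul_le_mul_of_nonneg_left hsum3 (by positivity)
  -- numerics
  have hlogN : Real.log N ≤ Real.log (C+2) + L := by
    have hle : (N:ℝ) ≤ (C+2)*(2+T/S) := by nlinarith [hNx, hx, hC]
    calc Real.log N ≤ Real.log ((C+2)*(2+T/S)) :=
          Real.log_le_log (by positivity) hle
      _ = Real.log (C+2) + L := by
          rw [hL, Real.log_mul (by positivity) (by positivity)]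
  have hxL : 1 ≤ (T/S)*L := by nlinarith [hx, hL1]
  have h2' : 2 + Real.log N ≤ (3 + Real.log (C+2)) * L := by nlinarith [hlogN, hL1, hlogC]
  have e1 : 2*(C*T) * ((2/(S:ℝ))*(2*(2+Real.log N))) = 8*C*(T/S)*(2+Real.log N) := by
    field_simp
    ring
  have t1 : 8*C*(T/S)*(2+Real.log N) ≤ 8*C*(T/S)*((3+Real.log (C+2))*L) :=
    mul_le_mul_of_nonneg_left h2' (by positivity)
  have t2 : 5*(2*(N:ℝ)+1) ≤ (10*C+25)*(T/S) := by nlinarith [hNx, hx, hC]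
  have t3 : (10*C+25)*(T/S) ≤ (10*C+25)*(T/S)*L := by nlinarith [hx, hL1, hC]
  calc ((P.card : ℕ):ℝ)
      ≤ 2*(C*T) * (∑ k ∈ Icc (-(N:ℤ)) N,
          1/((max |u + k*(S:ℤ)| (S:ℤ) : ℤ):ℝ)) + 5*(2*(N:ℝ)+1) := hsum1
    _ ≤ 2*(C*T) * ((2/(S:ℝ)) * (2*(2+Real.log N))) + (10*C+25)*(T/S)*L := by
        linarith [hmono, t2, t3]
    _ ≤ (10*C + 26 + 8*C*(3 + Real.log (C+2))) * (T/S) * L := by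
        rw [e1]
        nlinarith [t1, hxL, hC, hlogC]
end
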